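/- arXiv:1811.03329 — 2 statements merged into one kernel-verified Lean document; each statement's English description precedes it below -/
import Mathlib

section
/- The number of cells of an arrangement of n hyperplanes in R^d is at most the sum over i from 0 to d of binomial(n, i); in particular it is O(n^d). -/
open Finset

/-- The number of cells (connected components of the complement) of an arbitrary
arrangement of `n` hyperplanes `{x | ∑ j, Z i j * x j = v i}` in `ℝ^d` is at most
`∑_{i=0}^{d} (n choose i)`; in particular it is `O(n^d)`. -/
theorem cellCount_le (d n : ℕ) (Z : Fin n → Fin d → ℝ) (v : Fin n → ℝ) :
    Nat.card (ConnectedComponents {x : Fin d → ℝ // ∀ i, ∑ j, Z i j * x j ≠ v i}) ≤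
      ∑ i ∈ Finset.range (d + 1), n.choose i := by
  classical
  set T := {x : Fin d → ℝ // ∀ i, ∑ j, Z i j * x j ≠ v i} with hT
  set sgn : T → Finset (Fin n) :=
    fun x => univ.filter fun i => v i < ∑ j, Z i j * x.1 j with hsgn
  have hcont : ∀ i : Fin n, Continuous fun x : T => ∑ j, Z i j * x.1 j := fun i =>
    continuous_finset_sum _ fun j _ =>
      continuous_const.mul ((continuous_apply j).comp continuous_subtype_val)
  -- `sgn` is constant on connected components
  have hconst : ∀ a b : T, connectedComponent a = connectedComponent b → sgn a = sgn b := by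
    intro a b hab
    have hbmem : b ∈ connectedComponent a := by rw [hab]; exact mem_connectedComponent
    have hamem : a ∈ connectedComponent a := mem_connectedComponent
    have key : ∀ p q : T, p ∈ connectedComponent a → q ∈ connectedComponent a →
        ∀ i : Fin n, v i < ∑ j, Z i j * p.1 j → v i < ∑ j, Z i j * q.1 j := by
      intro p q hp hq i hpi
      by_contra hqi
      have hq' : ∑ j, Z i j * q.1 j < v i := lt_of_le_of_ne (not_lt.1 hqi) (q.2 i)
      have hIVT := (isPreconnected_connectedComponent (x := a)).intermediate_value hq hp
        ((hcont i).continuousOn)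
      obtain ⟨z, _, hz⟩ := hIVT ⟨hq'.le, hpi.le⟩
      exact z.2 i hz
    ext i
    simp only [hsgn, mem_filter, mem_univ, true_and]
    exact ⟨fun h => key a b hamem hbmem i h, fun h => key b a hbmem hamem i h⟩
  -- equal sign vectors imply same connected component
  have hinj : ∀ a b : T, sgn a = sgn b →
      (ConnectedComponents.mk a = ConnectedComponents.mk b) := by
    intro a b hab
    set S : Set (Fin d → ℝ) :=
      {y | ∀ i, if i ∈ sgn a then v i < ∑ j, Z i j * y j else ∑ j, Z i j * y j < v i} with hS
    have hlin : ∀ i : Fin n, IsLinearMap ℝ (fun y : Fin d → ℝ => ∑ j, Z i j * y j) := by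
      intro i
      constructor
      · intro x y; simp [mul_add, Finset.sum_add_distrib]
      · intro c x
        simp only [Pi.smul_apply, smul_eq_mul, Finset.mul_sum]
        exact Finset.sum_congr rfl fun j _ => by ring
    have hconv : Convex ℝ S := by
      have hSeq : S = ⋂ i, {y | if i ∈ sgn a then v i < ∑ j, Z i j * y j
          else ∑ j, Z i j * y j < v i} := by
        ext y; simp [hS, Set.mem_iInter]
      rw [hSeq]
      refine convex_iInter fun i => ?_
      by_cases h : i ∈ sgn a
      · simpa [h] using convex_halfSpace_gt (hlin i) (v i)
      · simpa [h] using convex_halfSpace_lt (hlin i) (v i)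
    have hSsub : ∀ y ∈ S, ∀ i, ∑ j, Z i j * y j ≠ v i := by
      intro y hy i
      have hyi := hy i
      by_cases h : i ∈ sgn a
      · rw [if_pos h] at hyi; exact hyi.ne'
      · rw [if_neg h] at hyi; exact hyi.ne
    have haS : a.1 ∈ S := by
      intro i
      by_cases h : i ∈ sgn a
      · rw [if_pos h]; exact (mem_filter.1 h).2
      · rw [if_neg h]
        have hnl : ¬ v i < ∑ j, Z i j * a.1 j := fun hlt =>
          h (mem_filter.2 ⟨mem_univ _, hlt⟩)
        exact lt_of_le_of_ne (not_lt.1 hnl) (a.2 i)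
    have hbS : b.1 ∈ S := by
      intro i
      by_cases h : i ∈ sgn a
      · rw [if_pos h]
        have h' : i ∈ sgn b := hab ▸ h
        exact (mem_filter.1 h').2
      · rw [if_neg h]
        have h' : i ∉ sgn b := hab ▸ h
        have hnl : ¬ v i < ∑ j, Z i j * b.1 j := fun hlt =>
          h' (mem_filter.2 ⟨mem_univ _, hlt⟩)
        exact lt_of_le_of_ne (not_lt.1 hnl) (b.2 i)
    have hpre : IsPreconnected (Subtype.val ⁻¹' S : Set T) := by
      have himg : Subtype.val '' (Subtype.val ⁻¹' S : Set T) = S := by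
        rw [Set.image_preimage_eq_inter_range, Subtype.range_coe_subtype]
        ext y
        exact ⟨fun h => h.1, fun h => ⟨h, hSsub y h⟩⟩
      have h2 : IsPreconnected ((Subtype.val : T → (Fin d → ℝ)) '' (Subtype.val ⁻¹' S)) := by
        rw [himg]; exact hconv.isPreconnected
      exact Topology.IsInducing.subtypeVal.isPreconnected_image.mp h2
    have hsub := hpre.subset_connectedComponent (x := a) haS
    rw [ConnectedComponents.coe_eq_coe]
    exact connectedComponent_eq (hsub hbS)
  -- the family of realized sign vectors
  set 𝒜 : Finset (Finset (Fin n)) := univ.filter (fun u => ∃ x : T, sgn x = u) with h𝒜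
  have hmem : ∀ x : T, sgn x ∈ 𝒜 := fun x => mem_filter.2 ⟨mem_univ _, ⟨x, rfl⟩⟩
  let F : ConnectedComponents T → {u // u ∈ 𝒜} :=
    Quotient.lift (fun x : T => (⟨sgn x, hmem x⟩ : {u // u ∈ 𝒜}))
      (fun a b h => Subtype.ext (hconst a b h))
  have hFinj : Function.Injective F := by
    rintro ⟨x⟩ ⟨y⟩ hxy
    exact hinj x y (congrArg Subtype.val hxy)
  have h1 : Nat.card (ConnectedComponents T) ≤ 𝒜.card := by
    have := Nat.card_le_card_of_injective F hFinj
    simpa [Nat.card_eq_fintype_card, Fintype.card_coe] using this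
  -- VC dimension bound
  have hvc : ∀ s : Finset (Fin n), 𝒜.Shatters s → s.card ≤ d := by
    intro s hs
    by_contra hcard
    push_neg at hcard
    have hrank : ¬ LinearIndependent ℝ (fun i : ↥s => Z i.1) := by
      intro h
      have hle := h.fintype_card_le_finrank
      rw [Module.finrank_fin_fun, Fintype.card_coe] at hle
      omega
    obtain ⟨g, hg0, i0, hi0⟩ := Fintype.not_linearIndependent_iff.1 hrank
    set A : Fin n → ℝ := fun i => if h : i ∈ s then g ⟨i, h⟩ else 0 with hA
    have hAi0 : A i0.1 = g i0 := by simp [hA, i0.2]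
    have hAsum : ∀ j, ∑ i ∈ s, A i * Z i j = 0 := by
      intro j
      have hg0j := congrFun hg0 j
      simp only [Finset.sum_apply, Pi.smul_apply, smul_eq_mul, Pi.zero_apply] at hg0j
      rw [← Finset.sum_coe_sort s (fun i => A i * Z i j)]
      simpa [hA] using hg0j
    obtain ⟨B, hB1, hB2, hB3⟩ : ∃ B : Fin n → ℝ, (∀ j, ∑ i ∈ s, B i * Z i j = 0) ∧
        0 ≤ ∑ i ∈ s, B i * v i ∧ B i0.1 ≠ 0 := by
      rcases le_or_gt 0 (∑ i ∈ s, A i * v i) with h | h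
      · exact ⟨A, hAsum, h, by rw [hAi0]; exact hi0⟩
      · refine ⟨-A, fun j => ?_, ?_, ?_⟩
        · simp [neg_mul, Finset.sum_neg_distrib, hAsum j]
        · simp only [Pi.neg_apply, neg_mul, Finset.sum_neg_distrib]
          linarith
        · rw [Pi.neg_apply, hAi0]; simpa using hi0
    obtain ⟨u, hu𝒜, hsu⟩ := hs (filter_subset (fun i => 0 < B i) s)
    obtain ⟨x, hx⟩ := (mem_filter.1 hu𝒜).2
    have key : ∀ i ∈ s, (B i = 0 → B i * (∑ j, Z i j * x.1 j - v i) = 0) ∧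
        (B i ≠ 0 → 0 < B i * (∑ j, Z i j * x.1 j - v i)) := by
      intro i hi
      refine ⟨fun h0 => by rw [h0, zero_mul], fun hne => ?_⟩
      rcases lt_or_gt_of_ne hne with h | h
      · have hit : i ∉ s.filter (fun i => 0 < B i) := by
          simp only [mem_filter, not_and, not_lt]
          exact fun _ => h.le
        have hiu : i ∉ u := fun hiu => hit (by rw [← hsu]; exact mem_inter.2 ⟨hi, hiu⟩)
        have hnl : ¬ v i < ∑ j, Z i j * x.1 j := fun hlt =>
          hiu (by rw [← hx]; exact mem_filter.2 ⟨mem_univ _, hlt⟩)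
        have hlt : ∑ j, Z i j * x.1 j < v i := lt_of_le_of_ne (not_lt.1 hnl) (x.2 i)
        nlinarith
      · have hit : i ∈ s.filter (fun i => 0 < B i) := mem_filter.2 ⟨hi, h⟩
        have hiu : i ∈ u := by
          have hmem' : i ∈ s ∩ u := by rw [hsu]; exact hit
          exact (mem_inter.1 hmem').2
        have hlt : v i < ∑ j, Z i j * x.1 j := by
          rw [← hx] at hiu
          exact (mem_filter.1 hiu).2
        nlinarith
    have hpos : 0 < ∑ i ∈ s, B i * (∑ j, Z i j * x.1 j - v i) := by
      refine Finset.sum_pos' (fun i hi => ?_) ⟨i0.1, i0.2, (key i0.1 i0.2).2 hB3⟩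
      by_cases h0 : B i = 0
      · rw [(key i hi).1 h0]
      · exact ((key i hi).2 h0).le
    have hzero : ∑ i ∈ s, B i * (∑ j, Z i j * x.1 j) = 0 := by
      calc ∑ i ∈ s, B i * (∑ j, Z i j * x.1 j)
          = ∑ i ∈ s, ∑ j, B i * Z i j * x.1 j := by
            refine Finset.sum_congr rfl fun i _ => ?_
            rw [Finset.mul_sum]
            exact Finset.sum_congr rfl fun j _ => by ring
        _ = ∑ j, ∑ i ∈ s, B i * Z i j * x.1 j := Finset.sum_comm
        _ = ∑ j, (∑ i ∈ s, B i * Z i j) * x.1 j := by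
            refine Finset.sum_congr rfl fun j _ => ?_
            rw [Finset.sum_mul]
        _ = 0 := by simp [hB1]
    have hfinal : ∑ i ∈ s, B i * (∑ j, Z i j * x.1 j - v i) ≤ 0 := by
      simp only [mul_sub, Finset.sum_sub_distrib, hzero]
      linarith
    linarith
  have hvcd : 𝒜.vcDim ≤ d :=
    Finset.sup_le fun s hs => hvc s (mem_shatterer.1 hs)
  calc Nat.card (ConnectedComponents T) ≤ 𝒜.card := h1
    _ ≤ 𝒜.shatterer.card := Finset.card_le_card_shatterer 𝒜
    _ ≤ ∑ k ∈ Iic 𝒜.vcDim, (Fintype.card (Fin n)).choose k :=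
        Finset.card_shatterer_le_sum_vcDim
    _ ≤ ∑ i ∈ Finset.range (d + 1), n.choose i := by
        rw [Fintype.card_fin]
        refine Finset.sum_le_sum_of_subset fun k hk => ?_
        simp only [mem_Iic] at hk
        simp only [Finset.mem_range]
        omega
end

section
/- In the univariate current status NPMLE, any probability vector p over the intervals I_1, ..., I_{n+1} maximizing the likelihood L(p) = Π_i Σ_j p_j 1{I_j ⊆ R_i} assigns zero mass to any interval I_j whose count c_j = #{i : I_j ⊆ R_i} is strictly smaller than the count of an adjacent interval I_k for which {i : I_j ⊆ R_i} ⊆ {i : I_k ⊆ R_i}. -/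
open Finset Set

/-- Univariate current status NPMLE: with half-lines `Rᵢ` determined by the data
`(vᵢ, yᵢ)` and a partition of `ℝ` into ordered intervals `I₁, …, I_{n+1}` compatible
with the `Rᵢ`, any probability vector `p` maximizing the likelihood
`L(p) = ∏ i ∑_{j : Iⱼ ⊆ Rᵢ} p j` assigns zero mass to any interval `Iⱼ` whose count
`cⱼ = #{i : Iⱼ ⊆ Rᵢ}` is strictly smaller than the count of an adjacent interval `I_k`
with `{i : Iⱼ ⊆ Rᵢ} ⊆ {i : I_k ⊆ Rᵢ}`. -/
theorem current_status_npmle_zero_mass (n : ℕ) (v : Fin n → ℝ) (y : Fin n → Bool)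
    (hv : Function.Injective v)
    (R : Fin n → Set ℝ) (hR : ∀ i, R i = if y i then Set.Iic (v i) else Set.Ioi (v i))
    (I : Fin (n + 1) → Set ℝ)
    (hI : ∀ j, (I j).Nonempty ∧ (I j).OrdConnected)
    (hdisj : Pairwise (Function.onFun Disjoint I))
    (hcover : (⋃ j, I j) = Set.univ)
    (hcompat : ∀ (i : Fin n) (j : Fin (n + 1)), I j ⊆ R i ∨ I j ∩ R i = ∅)
    (hord : ∀ j k : Fin (n + 1), j < k → ∀ x ∈ I j, ∀ z ∈ I k, x < z)
    (c : Fin (n + 1) → ℕ)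
    (hc : ∀ j, c j = Nat.card {i : Fin n // I j ⊆ R i})
    (p : Fin (n + 1) → ℝ) (hp0 : ∀ j, 0 ≤ p j) (hp1 : ∑ j, p j = 1)
    (hmax : ∀ q : Fin (n + 1) → ℝ, (∀ j, 0 ≤ q j) → ∑ j, q j = 1 →
      ∏ i, (∑ j, Set.indicator {j' | I j' ⊆ R i} q j) ≤
        ∏ i, (∑ j, Set.indicator {j' | I j' ⊆ R i} p j))
    (j k : Fin (n + 1))
    (hadj : j.val + 1 = k.val ∨ k.val + 1 = j.val)
    (hdom : ∀ i : Fin n, I j ⊆ R i → I k ⊆ R i)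
    (hck : c j < c k) :
    p j = 0 := by
  classical
  by_contra hpj
  have hpj' : 0 < p j := lt_of_le_of_ne (hp0 j) (Ne.symm hpj)
  have hjk : j ≠ k := by rintro rfl; exact lt_irrefl _ hck
  -- rewrite factors as sums over filters
  have hfac : ∀ (q : Fin (n + 1) → ℝ) (i : Fin n),
      (∑ l, Set.indicator {j' | I j' ⊆ R i} q l)
        = ∑ l ∈ Finset.univ.filter (fun l => I l ⊆ R i), q l := by
    intro q i
    rw [Finset.sum_filter]
    refine Finset.sum_congr rfl fun l _ => ?_
    simp [Set.indicator_apply, Set.mem_setOf_eq]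
  -- every R i contains some interval
  have hexists : ∀ i, ∃ j', I j' ⊆ R i := by
    intro i
    have hRne : (R i).Nonempty := by
      rw [hR i]
      split
      · exact ⟨v i, Set.mem_Iic.mpr le_rfl⟩
      · exact ⟨v i + 1, by simp⟩
    obtain ⟨x, hx⟩ := hRne
    have hxU : x ∈ ⋃ l, I l := by rw [hcover]; trivial
    obtain ⟨j', hj'⟩ := Set.mem_iUnion.mp hxU
    rcases hcompat i j' with h | h
    · exact ⟨j', h⟩
    · exact absurd h (Set.nonempty_iff_ne_empty.mp ⟨x, hj', hx⟩)
  -- uniform distribution has positive likelihood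
  have hn1 : (0:ℝ) < (n + 1 : ℝ) := by positivity
  have huni_sum : ∑ l : Fin (n + 1), ((n:ℝ) + 1)⁻¹ = 1 := by
    rw [Finset.sum_const, Finset.card_univ, Fintype.card_fin]
    field_simp
    rw [nsmul_eq_mul]; push_cast; field_simp
  have huni_pos : ∀ i : Fin n,
      0 < ∑ l, Set.indicator {j' | I j' ⊆ R i} (fun _ => ((n:ℝ) + 1)⁻¹) l := by
    intro i
    rw [hfac]
    obtain ⟨j', hj'⟩ := hexists i
    have hmem : j' ∈ Finset.univ.filter (fun l => I l ⊆ R i) := by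
      simp [hj']
    refine lt_of_lt_of_le ?_
      (Finset.single_le_sum (f := fun _ => ((n:ℝ) + 1)⁻¹) (fun _ _ => by positivity) hmem)
    positivity
  have hLp_pos : 0 < ∏ i, (∑ l, Set.indicator {j' | I j' ⊆ R i} p l) :=
    lt_of_lt_of_le (Finset.prod_pos fun i _ => huni_pos i)
      (hmax _ (fun _ => by positivity) huni_sum)
  have hfac_nonneg : ∀ i : Fin n, 0 ≤ ∑ l, Set.indicator {j' | I j' ⊆ R i} p l := by
    intro i
    exact Finset.sum_nonneg fun l _ => Set.indicator_nonneg (fun l' _ => hp0 l') l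
  have hfac_pos : ∀ i : Fin n, 0 < ∑ l, Set.indicator {j' | I j' ⊆ R i} p l := by
    intro i
    rcases lt_or_eq_of_le (hfac_nonneg i) with h | h
    · exact h
    · exact absurd (Finset.prod_eq_zero (Finset.mem_univ i) h.symm)
        (ne_of_gt hLp_pos)
  -- there is an index i₀ counted for k but not for j
  have hi0 : ∃ i : Fin n, I k ⊆ R i ∧ ¬ I j ⊆ R i := by
    by_contra h
    push_neg at h
    have hsub : {i : Fin n | I k ⊆ R i} ⊆ {i : Fin n | I j ⊆ R i} := fun i hi => h i hi
    have hle : c k ≤ c j := by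
      rw [hc j, hc k]
      exact Set.ncard_le_ncard hsub (Set.toFinite _)
    omega
  obtain ⟨i₀, hki₀, hji₀⟩ := hi0
  -- the modified distribution
  set q : Fin (n + 1) → ℝ := fun l => if l = j then 0 else if l = k then p k + p j else p l
    with hq
  have hq0 : ∀ l, 0 ≤ q l := by
    intro l
    simp only [hq]
    split_ifs
    · exact le_refl 0
    · exact add_nonneg (hp0 k) (hp0 j)
    · exact hp0 l
  have hdiff : ∀ l, q l - p l = (if l = j then -p j else 0) + (if l = k then p j else 0) := by
    intro l
    simp only [hq]
    rcases eq_or_ne l j with rfl | hlj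
    · simp [hjk]
    · rcases eq_or_ne l k with rfl | hlk
      · simp [hjk.symm, hlj]
      · simp [hlj, hlk]
  have hSsum : ∀ S : Finset (Fin (n + 1)),
      ∑ l ∈ S, q l = ∑ l ∈ S, p l
        + ((if j ∈ S then -p j else 0) + (if k ∈ S then p j else 0)) := by
    intro S
    have : ∑ l ∈ S, (q l - p l)
        = (if j ∈ S then -p j else 0) + (if k ∈ S then p j else 0) := by
      rw [Finset.sum_congr rfl fun l _ => hdiff l, Finset.sum_add_distrib,
        Finset.sum_ite_eq' S j (fun _ => -p j), Finset.sum_ite_eq' S k (fun _ => p j)]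
    have h2 : ∑ l ∈ S, (q l - p l) = ∑ l ∈ S, q l - ∑ l ∈ S, p l := Finset.sum_sub_distrib _ _
    linarith [this, h2]
  have hq1 : ∑ l, q l = 1 := by
    rw [hSsum Finset.univ]
    simp [hp1]
  -- factorwise comparison
  have hle : ∀ i : Fin n, (∑ l, Set.indicator {j' | I j' ⊆ R i} p l)
      ≤ ∑ l, Set.indicator {j' | I j' ⊆ R i} q l := by
    intro i
    rw [hfac, hfac, hSsum]
    rcases Classical.em (I j ⊆ R i) with hj | hj
    · have hk := hdom i hj
      simp [hj, hk]
    · rcases Classical.em (I k ⊆ R i) with hk | hk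
      · simp only [Finset.mem_filter, Finset.mem_univ, true_and, hj, hk,
          if_true, if_false]
        linarith [hpj'.le]
      · simp [hj, hk]
  have hlt : (∑ l, Set.indicator {j' | I j' ⊆ R i₀} p l)
      < ∑ l, Set.indicator {j' | I j' ⊆ R i₀} q l := by
    rw [hfac, hfac, hSsum]
    simp only [Finset.mem_filter, Finset.mem_univ, true_and, hji₀, hki₀,
      if_true, if_false]
    linarith
  have : ∏ i, (∑ l, Set.indicator {j' | I j' ⊆ R i} p l)
      < ∏ i, (∑ l, Set.indicator {j' | I j' ⊆ R i} q l) :=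
    Finset.prod_lt_prod (fun i _ => hfac_pos i) (fun i _ => hle i)
      ⟨i₀, Finset.mem_univ i₀, hlt⟩
  exact absurd (hmax q hq0 hq1) (not_le.mpr this)
end
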